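/- arXiv:2007.03984 — 4 statements merged into one kernel-verified Lean document; each statement's English description precedes it below -/
import Mathlib

section
/- Let (→AB, →CD) be a proper pair of oriented segments in 𝒢_{m,n} and let f = f_{→AB} ∧ f_{→CD} (i.e., M₁(f) = M₁(f_{→AB}) ∩ M₁(f_{→CD})). If f has no true points on the boundary of the grid, i.e. M₁(f) ⊆ {1,…,m−2}×{1,…,n−2}, then the Euclidean distance from A to the line through C and D and the Euclidean distance from B to the line through C and D are each at most 1. -/
open scoped Real

noncomputable section

/-- Integer 2×2 determinant of two planar vectors. -/
def detZ (v w : ℤ × ℤ) : ℤ := v.1 * w.2 - v.2 * w.1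

/-- Real 2×2 determinant of two planar vectors. -/
def detR (v w : ℝ × ℝ) : ℝ := v.1 * w.2 - v.2 * w.1

/-- The grid 𝒢_{m,n} = {0,…,m−1} × {0,…,n−1} of integer points. -/
def Grid (m n : ℕ) : Set (ℤ × ℤ) :=
  {p | 0 ≤ p.1 ∧ p.1 < (m : ℤ) ∧ 0 ≤ p.2 ∧ p.2 < (n : ℤ)}

/-- The boundary B(𝒢_{m,n}) of the grid. -/
def GridBoundary (m n : ℕ) : Set (ℤ × ℤ) :=
  {p | p ∈ Grid m n ∧ (p.1 = 0 ∨ p.1 = (m : ℤ) - 1 ∨ p.2 = 0 ∨ p.2 = (n : ℤ) - 1)}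

/-- The segment AB is prime: A, B are the only integer points on it
(equivalently, the coordinates of B − A are coprime). -/
def PrimeSeg (A B : ℤ × ℤ) : Prop := Int.gcd (B.1 - A.1) (B.2 - A.2) = 1

/-- f_{→AB}(X) = 1 : X on the line through A, B and strictly closer to A than to B,
or the triangle →ABX is counterclockwise. -/
def SegTrue (A B X : ℤ × ℤ) : Prop :=
  (detZ (B - A) (X - A) = 0 ∧
    (X.1 - A.1) ^ 2 + (X.2 - A.2) ^ 2 < (X.1 - B.1) ^ 2 + (X.2 - B.2) ^ 2) ∨
  0 < detZ (B - A) (X - A)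

/-- The pair of oriented segments (→AB, →CD) with endpoints in 𝒢_{m,n} is proper. -/
def ProperPair (m n : ℕ) (A B C D : ℤ × ℤ) : Prop :=
  A ∈ Grid m n ∧ B ∈ Grid m n ∧ C ∈ Grid m n ∧ D ∈ Grid m n ∧
  PrimeSeg A B ∧ PrimeSeg C D ∧
  SegTrue C D A ∧ SegTrue C D B ∧ SegTrue A B C ∧ SegTrue A B D

/-- A, B, C, D (in this cyclic order) are the vertices of a (strictly) convex
quadrilateral with sides AB, BC, CD, DA. -/
def QuadConv (A B C D : ℤ × ℤ) : Prop :=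
  (0 < detZ (B - A) (C - B) ∧ 0 < detZ (C - B) (D - C) ∧
    0 < detZ (D - C) (A - D) ∧ 0 < detZ (A - D) (B - A)) ∨
  (detZ (B - A) (C - B) < 0 ∧ detZ (C - B) (D - C) < 0 ∧
    detZ (D - C) (A - D) < 0 ∧ detZ (A - D) (B - A) < 0)

/-- The segments AB and CD are in convex position: A, B, C, D are the vertices of a
convex quadrilateral in which AB and CD are opposite sides. -/
def ConvexPos (A B C D : ℤ × ℤ) : Prop := QuadConv A B C D ∨ QuadConv A B D C

/-- Real-plane version of `QuadConv`. -/
def QuadConvR (A B C D : ℝ × ℝ) : Prop :=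
  (0 < detR (B - A) (C - B) ∧ 0 < detR (C - B) (D - C) ∧
    0 < detR (D - C) (A - D) ∧ 0 < detR (A - D) (B - A)) ∨
  (detR (B - A) (C - B) < 0 ∧ detR (C - B) (D - C) < 0 ∧
    detR (D - C) (A - D) < 0 ∧ detR (A - D) (B - A) < 0)

/-- Real-plane version of `ConvexPos`. -/
def ConvexPosR (A B C D : ℝ × ℝ) : Prop := QuadConvR A B C D ∨ QuadConvR A B D C

/-- Embedding of integer points into the real plane. -/
def ptR (p : ℤ × ℤ) : ℝ × ℝ := ((p.1 : ℝ), (p.2 : ℝ))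

/-- Embedding of integer points into the Euclidean plane. -/
def ptE (p : ℤ × ℤ) : EuclideanSpace ℝ (Fin 2) := WithLp.toLp 2 ![(p.1 : ℝ), (p.2 : ℝ)]

/-- A threshold function on 𝒢_{m,n}, identified with its set T of true points:
the convex hulls of true and false points are disjoint. -/
def IsThresholdSet (m n : ℕ) (T : Set (ℤ × ℤ)) : Prop :=
  T ⊆ Grid m n ∧
  Disjoint (convexHull ℝ (ptR '' T)) (convexHull ℝ (ptR '' (Grid m n \ T)))

/-- A 2-threshold function on 𝒢_{m,n}, identified with its set of true points. -/
def IsTwoThresholdSet (m n : ℕ) (T : Set (ℤ × ℤ)) : Prop :=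
  ∃ T₁ T₂ : Set (ℤ × ℤ), IsThresholdSet m n T₁ ∧ IsThresholdSet m n T₂ ∧ T = T₁ ∩ T₂

/-- t₂(m,n): the number of 2-threshold functions on 𝒢_{m,n}. -/
def t2 (m n : ℕ) : ℕ := {T : Set (ℤ × ℤ) | IsTwoThresholdSet m n T}.ncard

/-- The set of proper (unordered) pairs of oriented segments in 𝒢_{m,n}. -/
def ProperPairs (m n : ℕ) : Set (Sym2 ((ℤ × ℤ) × (ℤ × ℤ))) :=
  {z | ∃ A B C D : ℤ × ℤ, z = s((A, B), (C, D)) ∧ ProperPair m n A B C D}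

/-- q(m,n): the number of proper pairs of oriented segments in 𝒢_{m,n}. -/
def qcount (m n : ℕ) : ℕ := (ProperPairs m n).ncard

/-- The set of unordered pairs of (non-oriented) prime segments with endpoints in
𝒢_{m,n} that are in convex position. -/
def ConvexPrimePairs (m n : ℕ) : Set (Sym2 (Sym2 (ℤ × ℤ))) :=
  {z | ∃ A B C D : ℤ × ℤ, z = s(s(A, B), s(C, D)) ∧
    A ∈ Grid m n ∧ B ∈ Grid m n ∧ C ∈ Grid m n ∧ D ∈ Grid m n ∧
    PrimeSeg A B ∧ PrimeSeg C D ∧ ConvexPos A B C D}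

/-- p(m,n): the number of unordered pairs of prime segments in convex position with
endpoints in 𝒢_{m,n}. -/
def pcount (m n : ℕ) : ℕ := (ConvexPrimePairs m n).ncard

/-- The axis-aligned bounding box of {A,B,C,D} is the rectangle [0,u]×[0,v]. -/
def InBBox (u v : ℕ) (A B C D : ℤ × ℤ) : Prop :=
  min (min A.1 B.1) (min C.1 D.1) = 0 ∧
  max (max A.1 B.1) (max C.1 D.1) = (u : ℤ) ∧
  min (min A.2 B.2) (min C.2 D.2) = 0 ∧
  max (max A.2 B.2) (max C.2 D.2) = (v : ℤ)

/-- The pair {AB, CD} of prime segments is in convex position with bounding box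
ℛ_{u,v} = [0,u]×[0,v]. -/
def ZPair (u v : ℕ) (A B C D : ℤ × ℤ) : Prop :=
  PrimeSeg A B ∧ PrimeSeg C D ∧ ConvexPos A B C D ∧ InBBox u v A B C D

/-- Z(u,v): pairs of prime segments in convex position with bounding box ℛ_{u,v}. -/
def Zset (u v : ℕ) : Set (Sym2 (Sym2 (ℤ × ℤ))) :=
  {z | ∃ A B C D : ℤ × ℤ, z = s(s(A, B), s(C, D)) ∧ ZPair u v A B C D}

/-- P is a corner (vertex) of the rectangle ℛ_{u,v} = [0,u]×[0,v]. -/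
def RectCorner (u v : ℕ) (P : ℤ × ℤ) : Prop :=
  (P.1 = 0 ∨ P.1 = (u : ℤ)) ∧ (P.2 = 0 ∨ P.2 = (v : ℤ))

/-- The number of points among A, B, C, D that are corners of ℛ_{u,v}. -/
def cornerCount (u v : ℕ) (A B C D : ℤ × ℤ) : ℕ :=
  {P : ℤ × ℤ | P ∈ ({A, B, C, D} : Set (ℤ × ℤ)) ∧ RectCorner u v P}.ncard

/-- Z_i(u,v): the pairs in Z(u,v) with exactly i endpoints at corners of ℛ_{u,v}. -/
def Zi (i u v : ℕ) : Set (Sym2 (Sym2 (ℤ × ℤ))) :=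
  {z | ∃ A B C D : ℤ × ℤ, z = s(s(A, B), s(C, D)) ∧ ZPair u v A B C D ∧
    cornerCount u v A B C D = i}

/-- Z₂ᵃ(u,v): exactly two corner endpoints, lying at adjacent corners of ℛ_{u,v}. -/
def Z2a (u v : ℕ) : Set (Sym2 (Sym2 (ℤ × ℤ))) :=
  {z | ∃ A B C D : ℤ × ℤ, z = s(s(A, B), s(C, D)) ∧ ZPair u v A B C D ∧
    cornerCount u v A B C D = 2 ∧
    ∃ X Y : ℤ × ℤ, X ∈ ({A, B, C, D} : Set (ℤ × ℤ)) ∧ Y ∈ ({A, B, C, D} : Set (ℤ × ℤ)) ∧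
      X ≠ Y ∧ RectCorner u v X ∧ RectCorner u v Y ∧ (X.1 = Y.1 ∨ X.2 = Y.2)}

/-- Z₂ᵇ(u,v): exactly two corner endpoints, at opposite corners of ℛ_{u,v},
both on the same segment of the pair. -/
def Z2b (u v : ℕ) : Set (Sym2 (Sym2 (ℤ × ℤ))) :=
  {z | ∃ A B C D : ℤ × ℤ, z = s(s(A, B), s(C, D)) ∧ ZPair u v A B C D ∧
    cornerCount u v A B C D = 2 ∧
    RectCorner u v A ∧ RectCorner u v B ∧ A.1 ≠ B.1 ∧ A.2 ≠ B.2}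

/-- Z₂ᶜ(u,v): exactly two corner endpoints, at opposite corners of ℛ_{u,v},
belonging to different segments of the pair. -/
def Z2c (u v : ℕ) : Set (Sym2 (Sym2 (ℤ × ℤ))) :=
  {z | ∃ A B C D : ℤ × ℤ, z = s(s(A, B), s(C, D)) ∧ ZPair u v A B C D ∧
    cornerCount u v A B C D = 2 ∧
    RectCorner u v A ∧ RectCorner u v C ∧ A.1 ≠ C.1 ∧ A.2 ≠ C.2}

/-- Z₁ᵃ(u,v): exactly one corner endpoint A; the other endpoint B of the segment
containing A is an interior point of ℛ_{u,v}. -/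
def Z1a (u v : ℕ) : Set (Sym2 (Sym2 (ℤ × ℤ))) :=
  {z | ∃ A B C D : ℤ × ℤ, z = s(s(A, B), s(C, D)) ∧ ZPair u v A B C D ∧
    cornerCount u v A B C D = 1 ∧ RectCorner u v A ∧
    0 < B.1 ∧ B.1 < (u : ℤ) ∧ 0 < B.2 ∧ B.2 < (v : ℤ)}

/-- Z₁ᵇ(u,v): exactly one corner endpoint A; the other endpoint B of the segment
containing A lies on the boundary of ℛ_{u,v}. -/
def Z1b (u v : ℕ) : Set (Sym2 (Sym2 (ℤ × ℤ))) :=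
  {z | ∃ A B C D : ℤ × ℤ, z = s(s(A, B), s(C, D)) ∧ ZPair u v A B C D ∧
    cornerCount u v A B C D = 1 ∧ RectCorner u v A ∧
    (B.1 = 0 ∨ B.1 = (u : ℤ) ∨ B.2 = 0 ∨ B.2 = (v : ℤ))}

end

/-! Write `ℓ₁ = orient A B` and `ℓ₂ = orient C D`. Every grid point of the wedge
`{ℓ₁ ≥ 1, ℓ₂ ≥ 1}` is a true point, hence interior, so no walk by king moves through the wedge
that keeps making progress in a fixed direction can start inside the grid. Such walks exist
whenever the claim fails. First, a king move from `A` raising both `ℓ₁` and `ℓ₂` could simply be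
repeated; this forces `(B - A)ᵢ (D - C)ᵢ ≤ 0` for both coordinates. Next, if `P ∈ {A, B}` had
`ℓ₂ P > ‖D - C‖∞`, an axis neighbour of `P` lies in the wedge, and from it one walks along the
digital line of `ℓ₂`-width `‖D - C‖∞` parallel to `CD`, on which those sign conditions keep `ℓ₁`
positive. Hence `ℓ₂ P ≤ ‖D - C‖∞ ≤ ‖D - C‖`, i.e. `P` is within distance `1` of the line `CD`. -/

lemma Int.abs_sign_le_one (a : ℤ) : |a.sign| ≤ 1 := by
  rcases a.sign_trichotomy with h | h | h <;> simp [h]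

lemma Int.mul_sign_self_eq_abs (a : ℤ) : a * a.sign = |a| := by
  rw [mul_comm, Int.sign_mul_self_eq_abs]

lemma Int.mul_sign_of_mul_pos {a b : ℤ} (h : 0 < a * b) : b * a.sign = |b| := by
  rcases lt_trichotomy a 0 with ha | ha | ha
  · rw [Int.sign_eq_neg_one_of_neg ha, abs_of_neg (by nlinarith)]; ring
  · simp [ha] at h
  · rw [Int.sign_eq_one_of_pos ha, abs_of_pos (by nlinarith)]; ring

lemma Int.mul_sign_of_mul_nonpos {a b : ℤ} (h : a * b ≤ 0) (ha : a ≠ 0) :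
    b * a.sign = -|b| := by
  rcases lt_or_gt_of_ne ha with ha | ha
  · rw [Int.sign_eq_neg_one_of_neg ha, abs_of_nonneg (by nlinarith)]; ring
  · rw [Int.sign_eq_one_of_pos ha, abs_of_nonpos (by nlinarith)]; ring

lemma Int.abs_mul_sign_le (a b : ℤ) : |b * a.sign| ≤ |b| := by
  rw [abs_mul]; exact mul_le_of_le_one_right (abs_nonneg b) (Int.abs_sign_le_one a)

lemma exists_abs_le_one_mem_Icc {p lo hi y : ℤ} (hwidth : |p| ≤ hi - lo + 1)
    (hlo : lo - |p| ≤ y) (hhi : y ≤ hi + |p|) :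
    ∃ τ : ℤ, |τ| ≤ 1 ∧ lo ≤ y + p * τ ∧ y + p * τ ≤ hi := by
  have hp := Int.mul_sign_self_eq_abs p
  by_cases h₁ : y < lo
  · exact ⟨p.sign, Int.abs_sign_le_one p, by omega, by omega⟩
  by_cases h₂ : hi < y
  · exact ⟨-p.sign, by rw [abs_neg]; exact Int.abs_sign_le_one p, by rw [mul_neg]; omega,
      by rw [mul_neg]; omega⟩
  exact ⟨0, by simp, by omega, by omega⟩

def orient (A B X : ℤ × ℤ) : ℤ := detZ (B - A) (X - A)

def GridInterior (m n : ℕ) : Set (ℤ × ℤ) :=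
  {X | 1 ≤ X.1 ∧ X.1 ≤ (m : ℤ) - 2 ∧ 1 ≤ X.2 ∧ X.2 ≤ (n : ℤ) - 2}

def Wedge (A B C D : ℤ × ℤ) : Set (ℤ × ℤ) :=
  {X | 1 ≤ orient A B X ∧ 1 ≤ orient C D X}

-- The axis neighbours of `P` on the positive side of `AB`; each is `P` itself when `AB` is
-- parallel to its axis.
def vStep (A B P : ℤ × ℤ) : ℤ × ℤ := P + (0, (B.1 - A.1).sign)

def hStep (A B P : ℤ × ℤ) : ℤ × ℤ := P + (-(B.2 - A.2).sign, 0)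

lemma orient_left_eq_zero (A B : ℤ × ℤ) : orient A B A = 0 := by
  simp [orient, detZ]

lemma orient_right_eq_zero (A B : ℤ × ℤ) : orient A B B = 0 := by
  simp only [orient, detZ]; ring

lemma orient_add (A B X u : ℤ × ℤ) : orient A B (X + u) = orient A B X + detZ (B - A) u := by
  simp only [orient, detZ, Prod.fst_add, Prod.snd_add, Prod.fst_sub, Prod.snd_sub]; ring

lemma orient_swap (A B X : ℤ × ℤ) : orient A B X.swap = orient B.swap A.swap X := by
  simp only [orient, detZ, Prod.fst_sub, Prod.snd_sub, Prod.fst_swap, Prod.snd_swap]; ring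

lemma mul_orient_eq_of_orient_eq_zero {A B C D P : ℤ × ℤ} (hP : orient A B P = 0)
    (X : ℤ × ℤ) :
    (D.1 - C.1) * orient A B X = (B.1 - A.1) * (orient C D X - orient C D P) +
      detZ (B - A) (D - C) * (X.1 - P.1) := by
  simp only [orient, detZ, Prod.fst_sub, Prod.snd_sub] at hP ⊢
  linear_combination (D.1 - C.1) * hP

lemma orient_vStep (A B C D P : ℤ × ℤ) :
    orient C D (vStep A B P) = orient C D P + (D.1 - C.1) * (B.1 - A.1).sign := by
  rw [vStep, orient_add]; simp only [detZ, Prod.fst_sub, Prod.snd_sub]; ring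

lemma orient_hStep (A B C D P : ℤ × ℤ) :
    orient C D (hStep A B P) = orient C D P + (D.2 - C.2) * (B.2 - A.2).sign := by
  rw [hStep, orient_add]; simp only [detZ, Prod.fst_sub, Prod.snd_sub]; ring

lemma swap_vStep (A B P : ℤ × ℤ) : (vStep A B P).swap = hStep B.swap A.swap P.swap := by
  simp only [vStep, hStep, Prod.swap_add, Prod.swap_prod_mk, Prod.snd_swap]
  rw [← Int.sign_neg, neg_sub]

lemma swap_hStep (A B P : ℤ × ℤ) : (hStep A B P).swap = vStep B.swap A.swap P.swap := by
  simp only [vStep, hStep, Prod.swap_add, Prod.swap_prod_mk, Prod.fst_swap]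
  rw [← Int.sign_neg, neg_sub]

lemma swap_mem_grid {m n : ℕ} {X : ℤ × ℤ} : X.swap ∈ Grid m n ↔ X ∈ Grid n m := by
  simp only [Grid, Set.mem_ofPred_eq, Prod.fst_swap, Prod.snd_swap]; tauto

lemma swap_mem_gridInterior {m n : ℕ} {X : ℤ × ℤ} :
    X.swap ∈ GridInterior m n ↔ X ∈ GridInterior n m := by
  simp only [GridInterior, Set.mem_ofPred_eq, Prod.fst_swap, Prod.snd_swap]; tauto

lemma swap_mem_wedge {A B C D X : ℤ × ℤ} :
    X.swap ∈ Wedge A B C D ↔ X ∈ Wedge B.swap A.swap D.swap C.swap := by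
  simp only [Wedge, Set.mem_ofPred_eq, orient_swap]

lemma Grid.finite (m n : ℕ) : (Grid m n).Finite :=
  ((Set.finite_Ico 0 (m : ℤ)).prod (Set.finite_Ico 0 (n : ℤ))).subset
    fun _ hX => ⟨⟨hX.1, hX.2.1⟩, hX.2.2.1, hX.2.2.2⟩

lemma add_mem_grid {m n : ℕ} {X u : ℤ × ℤ} (hX : X ∈ GridInterior m n)
    (hu₁ : |u.1| ≤ 1) (hu₂ : |u.2| ≤ 1) : X + u ∈ Grid m n := by
  obtain ⟨h₁, h₂, h₃, h₄⟩ := hX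
  rw [abs_le] at hu₁ hu₂
  exact ⟨by simp only [Prod.fst_add]; omega, by simp only [Prod.fst_add]; omega,
    by simp only [Prod.snd_add]; omega, by simp only [Prod.snd_add]; omega⟩

lemma not_mem_grid_of_ascent {m n : ℕ} {S : Set (ℤ × ℤ)} (w : ℤ × ℤ → ℤ)
    (hS : S ∩ Grid m n ⊆ GridInterior m n)
    (hstep : ∀ X ∈ S, ∃ u : ℤ × ℤ, |u.1| ≤ 1 ∧ |u.2| ≤ 1 ∧ X + u ∈ S ∧ w X < w (X + u))
    {X₀ : ℤ × ℤ} (hX₀ : X₀ ∈ S) : X₀ ∉ Grid m n := by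
  intro hX₀g
  obtain ⟨X, hX, hmax⟩ := Set.exists_max_image (S ∩ Grid m n) w
    ((Grid.finite m n).subset Set.inter_subset_right) ⟨X₀, hX₀, hX₀g⟩
  obtain ⟨u, hu₁, hu₂, hXu, hlt⟩ := hstep X hX.1
  exact (hmax _ ⟨hXu, add_mem_grid (hS hX) hu₁ hu₂⟩).not_gt hlt

lemma not_mem_grid_of_ray {m n : ℕ} {A B C D X₀ u : ℤ × ℤ}
    (hW : Wedge A B C D ∩ Grid m n ⊆ GridInterior m n) (hX₀ : X₀ ∈ Wedge A B C D)
    (hu₁ : |u.1| ≤ 1) (hu₂ : |u.2| ≤ 1) (hu : u ≠ 0)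
    (h₁ : 0 ≤ detZ (B - A) u) (h₂ : 0 ≤ detZ (D - C) u) : X₀ ∉ Grid m n := by
  have hpos : 0 < u.1 * u.1 + u.2 * u.2 := by
    by_contra h
    have h₁ : u.1 = 0 := by nlinarith [mul_self_nonneg u.1, mul_self_nonneg u.2]
    have h₂ : u.2 = 0 := by nlinarith [mul_self_nonneg u.1, mul_self_nonneg u.2]
    exact hu (Prod.ext h₁ h₂)
  refine not_mem_grid_of_ascent (fun X => u.1 * X.1 + u.2 * X.2) hW (fun X hX => ?_) hX₀
  refine ⟨u, hu₁, hu₂, ⟨?_, ?_⟩, ?_⟩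
  · rw [orient_add]; linarith [hX.1]
  · rw [orient_add]; linarith [hX.2]
  · simp only [Prod.fst_add, Prod.snd_add]; linarith

/-- The lattice points with `lo ≤ orient C D X ≤ hi` form a king-connected digital line as soon
as the window is as wide as the dominant coordinate of `D - C`. -/
lemma not_mem_grid_of_strip {m n : ℕ} {C D X₀ : ℤ × ℤ} {lo hi c ε : ℤ}
    (hdom : |D.2 - C.2| ≤ |D.1 - C.1|) (hwidth : |D.1 - C.1| ≤ hi - lo + 1) (hε : |ε| = 1)
    (hS : {X | lo ≤ orient C D X ∧ orient C D X ≤ hi ∧ c ≤ ε * X.1} ∩ Grid m n ⊆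
      GridInterior m n)
    (hX₀ : lo ≤ orient C D X₀ ∧ orient C D X₀ ≤ hi ∧ c ≤ ε * X₀.1) : X₀ ∉ Grid m n := by
  have hεε : ε * ε = 1 := by rw [← abs_mul_abs_self, hε, one_mul]
  refine not_mem_grid_of_ascent (fun X => ε * X.1) hS (fun X ⟨hlo, hhi, hc⟩ => ?_) hX₀
  have hqε : |(D.2 - C.2) * ε| ≤ |D.1 - C.1| := by rw [abs_mul, hε, mul_one]; exact hdom
  obtain ⟨τ, hτ, hτlo, hτhi⟩ := exists_abs_le_one_mem_Icc (y := orient C D X - (D.2 - C.2) * ε)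
    hwidth (by linarith [le_abs_self ((D.2 - C.2) * ε)])
    (by linarith [neg_abs_le ((D.2 - C.2) * ε)])
  have hstep : orient C D (X + (ε, τ)) = orient C D X - (D.2 - C.2) * ε + (D.1 - C.1) * τ := by
    rw [orient_add]; simp only [detZ, Prod.fst_sub, Prod.snd_sub]; ring
  refine ⟨(ε, τ), hε.le, hτ, ⟨?_, ?_, ?_⟩, ?_⟩
  · rw [hstep]; exact hτlo
  · rw [hstep]; exact hτhi
  · simp only [Prod.fst_add]; linarith
  · simp only [Prod.fst_add]; linarith

section Wedge

variable {m n : ℕ} {A B C D : ℤ × ℤ}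

lemma mul_nonpos_of_wedge (hW : Wedge A B C D ∩ Grid m n ⊆ GridInterior m n)
    (hA : A ∈ GridInterior m n) (hA₂ : 0 ≤ orient C D A) :
    (B.1 - A.1) * (D.1 - C.1) ≤ 0 ∧ (B.2 - A.2) * (D.2 - C.2) ≤ 0 := by
  have no_ascent : ∀ u : ℤ × ℤ, |u.1| ≤ 1 → |u.2| ≤ 1 →
      1 ≤ detZ (B - A) u → 1 ≤ detZ (D - C) u → False := by
    intro u hu₁ hu₂ h₁ h₂
    have hu : u ≠ 0 := by rintro rfl; simp [detZ] at h₁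
    refine not_mem_grid_of_ray hW ⟨?_, ?_⟩ hu₁ hu₂ hu (by omega) (by omega)
      (add_mem_grid hA hu₁ hu₂)
    · rw [orient_add, orient_left_eq_zero]; omega
    · rw [orient_add]; omega
  constructor
  · by_contra! h
    refine no_ascent (0, (B.1 - A.1).sign) (by simp) (Int.abs_sign_le_one _) ?_ ?_
    · simp only [detZ, Prod.fst_sub, Prod.snd_sub, mul_zero, sub_zero, Int.mul_sign_self_eq_abs]
      exact Int.one_le_abs (left_ne_zero_of_mul h.ne')
    · simp only [detZ, Prod.fst_sub, Prod.snd_sub, mul_zero, sub_zero, Int.mul_sign_of_mul_pos h]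
      exact Int.one_le_abs (right_ne_zero_of_mul h.ne')
  · by_contra! h
    refine no_ascent (-(B.2 - A.2).sign, 0) (by simpa using Int.abs_sign_le_one _) (by simp) ?_ ?_
    · simp only [detZ, Prod.fst_sub, Prod.snd_sub, mul_zero, zero_sub, mul_neg, neg_neg,
        Int.mul_sign_self_eq_abs]
      exact Int.one_le_abs (left_ne_zero_of_mul h.ne')
    · simp only [detZ, Prod.fst_sub, Prod.snd_sub, mul_zero, zero_sub, mul_neg, neg_neg,
        Int.mul_sign_of_mul_pos h]
      exact Int.one_le_abs (right_ne_zero_of_mul h.ne')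

lemma false_of_far_of_abs_le (hW : Wedge A B C D ∩ Grid m n ⊆ GridInterior m n) (hAB : A ≠ B)
    (hsign : (B.1 - A.1) * (D.1 - C.1) ≤ 0) (hdom : |D.2 - C.2| ≤ |D.1 - C.1|) {P : ℤ × ℤ}
    (hP : orient A B P = 0) (hfar : |D.1 - C.1| < orient C D P)
    (hv : vStep A B P ∈ Grid m n) (hh : hStep A B P ∈ Grid m n) : False := by
  have hp : D.1 - C.1 ≠ 0 := by
    intro hp
    have hq : D.2 - C.2 = 0 := abs_nonpos_iff.mp (by simpa [hp] using hdom)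
    simp only [orient, detZ, Prod.fst_sub, Prod.snd_sub, hp, hq, zero_mul, sub_zero] at hfar
    simp at hfar
  have hp₁ : 1 ≤ |D.1 - C.1| := Int.one_le_abs hp
  by_cases hr₁ : B.1 - A.1 = 0
  · -- `AB` is vertical: walk vertically from `hStep A B P`, the direction in which `ℓ₂` grows
    have hr₂ : B.2 - A.2 ≠ 0 := fun hr₂ => hAB (Prod.ext (by omega) (by omega))
    refine not_mem_grid_of_ray hW ⟨?_, ?_⟩ (u := (0, (D.1 - C.1).sign)) (by simp)
      (Int.abs_sign_le_one _) (by simp [hp]) ?_ ?_ hh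
    · rw [orient_hStep, hP, Int.mul_sign_self_eq_abs, zero_add]; exact Int.one_le_abs hr₂
    · rw [orient_hStep]; linarith [neg_abs_le ((D.2 - C.2) * (B.2 - A.2).sign),
        Int.abs_mul_sign_le (B.2 - A.2) (D.2 - C.2)]
    · simp [detZ, hr₁]
    · simp only [detZ, Prod.fst_sub, Prod.snd_sub, mul_zero, sub_zero, Int.mul_sign_self_eq_abs]
      exact abs_nonneg _
  · -- walk along the digital line `ℓ₂ P - |D.1 - C.1| ≤ ℓ₂ X ≤ ℓ₂ P - 1` in the direction `ε`
    -- in which the drift `detZ (B - A) (D - C) / (D.1 - C.1)` of `ℓ₁` is nonnegative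
    set h₀ := orient C D P
    set δ := detZ (B - A) (D - C)
    set ε : ℤ := if 0 ≤ (D.1 - C.1) * δ then 1 else -1 with hε
    have hεδ : 0 ≤ (D.1 - C.1) * δ * ε := by
      rw [hε]; split_ifs with h <;> linarith
    have hε₁ : |ε| = 1 := by rw [hε]; split_ifs <;> simp
    have hrp : (B.1 - A.1) * (D.1 - C.1) ≤ -1 := by
      have := mul_ne_zero hr₁ hp; omega
    refine not_mem_grid_of_strip hdom (lo := h₀ - |D.1 - C.1|) (hi := h₀ - 1) (c := ε * P.1)
      (by omega) hε₁ ?_ ?_ hv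
    · rintro X ⟨⟨hlo, hhi, hc⟩, hX⟩
      refine hW ⟨⟨?_, by omega⟩, hX⟩
      have hid := mul_orient_eq_of_orient_eq_zero (C := C) (D := D) hP X
      have h₁ : 1 ≤ (B.1 - A.1) * (D.1 - C.1) * (orient C D X - h₀) := by nlinarith
      have h₂ : 0 ≤ (D.1 - C.1) * δ * (X.1 - P.1) := by
        have : (D.1 - C.1) * δ * (X.1 - P.1) = (D.1 - C.1) * δ * ε * (ε * X.1 - ε * P.1) := by
          have hεε : ε * ε = 1 := by rw [← abs_mul_abs_self, hε₁, one_mul]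
          linear_combination -(D.1 - C.1) * δ * (X.1 - P.1) * hεε
        rw [this]; exact mul_nonneg hεδ (by omega)
      have hpp : 1 ≤ (D.1 - C.1) * (D.1 - C.1) * orient A B X := by
        have : (D.1 - C.1) * (D.1 - C.1) * orient A B X =
            (B.1 - A.1) * (D.1 - C.1) * (orient C D X - h₀) + (D.1 - C.1) * δ * (X.1 - P.1) := by
          rw [mul_assoc, hid]; ring
        omega
      by_contra! h
      nlinarith [mul_self_nonneg (D.1 - C.1)]
    · have h := orient_vStep A B C D P
      rw [Int.mul_sign_of_mul_nonpos hsign hr₁] at h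
      refine ⟨by omega, by omega, ?_⟩
      simp [vStep]

lemma false_of_far_of_abs_le' (hW : Wedge A B C D ∩ Grid m n ⊆ GridInterior m n) (hAB : A ≠ B)
    (hsign : (B.2 - A.2) * (D.2 - C.2) ≤ 0) (hdom : |D.1 - C.1| ≤ |D.2 - C.2|) {P : ℤ × ℤ}
    (hP : orient A B P = 0) (hfar : |D.2 - C.2| < orient C D P)
    (hv : vStep A B P ∈ Grid m n) (hh : hStep A B P ∈ Grid m n) : False := by
  refine false_of_far_of_abs_le (m := n) (n := m) (A := B.swap) (B := A.swap) (C := D.swap)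
    (D := C.swap) (P := P.swap) ?_ (fun h => hAB (Prod.swap_injective h).symm) ?_ ?_ ?_ ?_ ?_ ?_
  · rintro X ⟨hXW, hXG⟩
    exact swap_mem_gridInterior.mp (hW ⟨swap_mem_wedge.mpr hXW, swap_mem_grid.mpr hXG⟩)
  · simp only [Prod.fst_swap]
    linarith [show (A.2 - B.2) * (C.2 - D.2) = (B.2 - A.2) * (D.2 - C.2) by ring]
  · simpa only [Prod.fst_swap, Prod.snd_swap, abs_sub_comm] using hdom
  · rwa [← orient_swap, Prod.swap_swap]
  · simpa only [← orient_swap, Prod.swap_swap, Prod.fst_swap, abs_sub_comm] using hfar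
  · rwa [← swap_hStep, swap_mem_grid]
  · rwa [← swap_vStep, swap_mem_grid]

lemma false_of_far (hW : Wedge A B C D ∩ Grid m n ⊆ GridInterior m n) (hAB : A ≠ B)
    (hsign₁ : (B.1 - A.1) * (D.1 - C.1) ≤ 0) (hsign₂ : (B.2 - A.2) * (D.2 - C.2) ≤ 0)
    {P : ℤ × ℤ} (hP : orient A B P = 0) (hfar : max |D.1 - C.1| |D.2 - C.2| < orient C D P)
    (hv : vStep A B P ∈ Grid m n) (hh : hStep A B P ∈ Grid m n) : False := by
  rcases le_total |D.2 - C.2| |D.1 - C.1| with hdom | hdom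
  · exact false_of_far_of_abs_le hW hAB hsign₁ hdom hP ((le_max_left _ _).trans_lt hfar) hv hh
  · exact false_of_far_of_abs_le' hW hAB hsign₂ hdom hP ((le_max_right _ _).trans_lt hfar) hv hh

lemma steps_mem_grid_of_mem_gridInterior {P : ℤ × ℤ} (hP : P ∈ GridInterior m n) :
    vStep A B P ∈ Grid m n ∧ hStep A B P ∈ Grid m n :=
  ⟨add_mem_grid hP (by simp) (Int.abs_sign_le_one _),
    add_mem_grid hP (by simpa using Int.abs_sign_le_one _) (by simp)⟩

/-- If a step from `B` left the grid, `B` lies on an edge, and since `A` is interior the other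
step runs along that edge into the wedge, giving a true boundary point. -/
lemma steps_mem_grid (hW : Wedge A B C D ∩ Grid m n ⊆ GridInterior m n)
    (hA : A ∈ GridInterior m n) (hB : B ∈ Grid m n)
    (hfar : max |D.1 - C.1| |D.2 - C.2| < orient C D B) :
    vStep A B B ∈ Grid m n ∧ hStep A B B ∈ Grid m n := by
  have hv : B.1 - A.1 ≠ 0 → vStep A B B ∈ Grid m n → vStep A B B ∈ GridInterior m n := by
    refine fun hr h => hW ⟨⟨?_, ?_⟩, h⟩
    · rw [orient_vStep, orient_right_eq_zero, Int.mul_sign_self_eq_abs]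
      have := Int.one_le_abs hr; omega
    · rw [orient_vStep]; linarith [neg_abs_le ((D.1 - C.1) * (B.1 - A.1).sign),
        Int.abs_mul_sign_le (B.1 - A.1) (D.1 - C.1), le_max_left |D.1 - C.1| |D.2 - C.2|]
  have hh : B.2 - A.2 ≠ 0 → hStep A B B ∈ Grid m n → hStep A B B ∈ GridInterior m n := by
    refine fun hr h => hW ⟨⟨?_, ?_⟩, h⟩
    · rw [orient_hStep, orient_right_eq_zero, Int.mul_sign_self_eq_abs]
      have := Int.one_le_abs hr; omega
    · rw [orient_hStep]; linarith [neg_abs_le ((D.2 - C.2) * (B.2 - A.2).sign),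
        Int.abs_mul_sign_le (B.2 - A.2) (D.2 - C.2), le_max_right |D.1 - C.1| |D.2 - C.2|]
  simp only [vStep, hStep, Grid, GridInterior, Set.mem_ofPred_eq, Prod.fst_add,
    Prod.snd_add] at hv hh hA hB ⊢
  rcases lt_trichotomy (B.1 - A.1) 0 with h₁ | h₁ | h₁ <;>
  rcases lt_trichotomy (B.2 - A.2) 0 with h₂ | h₂ | h₂ <;>
  simp only [Int.sign_eq_neg_one_of_neg, Int.sign_eq_one_of_pos, h₁, h₂, Int.sign_zero]
    at hv hh ⊢ <;>
  omega

end Wedge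

lemma PrimeSeg.ne {A B : ℤ × ℤ} (h : PrimeSeg A B) : A ≠ B := by
  rintro rfl; simp [PrimeSeg] at h

lemma segTrue_of_one_le_orient {A B X : ℤ × ℤ} (h : 1 ≤ orient A B X) : SegTrue A B X :=
  Or.inr (by rw [orient] at h; omega)

lemma segTrue_self {A B : ℤ × ℤ} (hAB : A ≠ B) : SegTrue A B A := by
  refine Or.inl ⟨by simp [detZ], ?_⟩
  have : B.1 - A.1 ≠ 0 ∨ B.2 - A.2 ≠ 0 := by
    by_contra! h; exact hAB (Prod.ext (by omega) (by omega))
  rcases this with h | h <;>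
    nlinarith [sq_pos_of_ne_zero h, sq_nonneg (A.1 - B.1), sq_nonneg (A.2 - B.2)]

lemma orient_nonneg_of_segTrue {C D X : ℤ × ℤ} (h : SegTrue C D X) : 0 ≤ orient C D X := by
  rcases h with ⟨h, -⟩ | h
  · exact h.ge
  · exact h.le

lemma sq_le_of_le_max {x a b : ℤ} (hx : 0 ≤ x) (h : x ≤ max |a| |b|) :
    x ^ 2 ≤ a ^ 2 + b ^ 2 := by
  rcases le_total |a| |b| with hab | hab
  · rw [max_eq_right hab] at h
    nlinarith [sq_abs b, sq_nonneg a]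
  · rw [max_eq_left hab] at h
    nlinarith [sq_abs a, sq_nonneg b]

/-- The foot of the perpendicular from `P` is at parameter `⟪P - C, D - C⟫ / ‖D - C‖²` on `CD`,
and Lagrange's identity turns its squared distance into `(orient C D P)² / ‖D - C‖²`. -/
lemma infDist_affineSpan_le_one {C D P : ℤ × ℤ} (hCD : C ≠ D)
    (h : orient C D P ^ 2 ≤ (D.1 - C.1) ^ 2 + (D.2 - C.2) ^ 2) :
    Metric.infDist (ptE P) (affineSpan ℝ {ptE C, ptE D} : Set (EuclideanSpace ℝ (Fin 2))) ≤ 1 := by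
  have hdist : ∀ t : ℝ, dist (ptE P) (AffineMap.lineMap (ptE C) (ptE D) t) =
      √(((P.1 : ℝ) - C.1 - t * (D.1 - C.1)) ^ 2 + ((P.2 : ℝ) - C.2 - t * (D.2 - C.2)) ^ 2) := by
    intro t
    rw [EuclideanSpace.dist_eq, Fin.sum_univ_two]
    simp [ptE, AffineMap.lineMap_apply, Real.dist_eq, sq_abs]
    ring_nf
  have hR : (((D.1 : ℝ) - C.1) * (P.2 - C.2) - (D.2 - C.2) * (P.1 - C.1)) ^ 2 ≤
      ((D.1 : ℝ) - C.1) ^ 2 + (D.2 - C.2) ^ 2 := by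
    simp only [orient, detZ, Prod.fst_sub, Prod.snd_sub] at h; exact_mod_cast h
  have hS : 0 < ((D.1 : ℝ) - C.1) ^ 2 + (D.2 - C.2) ^ 2 := by
    have : (D.1 : ℝ) - C.1 ≠ 0 ∨ (D.2 : ℝ) - C.2 ≠ 0 := by
      by_contra! h'
      exact hCD (Prod.ext (by exact_mod_cast (sub_eq_zero.mp h'.1).symm)
        (by exact_mod_cast (sub_eq_zero.mp h'.2).symm))
    rcases this with h' | h' <;> positivity
  generalize (D.1 : ℝ) - C.1 = p at hdist hR hS
  generalize (D.2 : ℝ) - C.2 = q at hdist hR hS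
  generalize (P.1 : ℝ) - C.1 = α at hdist hR
  generalize (P.2 : ℝ) - C.2 = β at hdist hR
  have ht := AffineMap.lineMap_mem_affineSpan_pair ((p * α + q * β) / (p ^ 2 + q ^ 2))
    (ptE C) (ptE D)
  calc Metric.infDist (ptE P) (affineSpan ℝ {ptE C, ptE D} : Set (EuclideanSpace ℝ (Fin 2)))
      ≤ dist (ptE P) (AffineMap.lineMap (ptE C) (ptE D) ((p * α + q * β) / (p ^ 2 + q ^ 2))) :=
        Metric.infDist_le_dist_of_mem ht
    _ = √((p * β - q * α) ^ 2 / (p ^ 2 + q ^ 2)) := by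
        rw [hdist]; congr 1; field_simp; ring
    _ ≤ 1 := Real.sqrt_le_one.mpr ((div_le_one hS).mpr hR)

/-- if a proper pair defines a 2-threshold function with no true points on
the boundary of the grid, then A and B are at Euclidean distance at most 1 from the line
through C and D. -/
theorem proper_pair_distance_le_one (m n : ℕ) (A B C D : ℤ × ℤ)
    (hpair : ProperPair m n A B C D)
    (hbnd : ∀ X : ℤ × ℤ, X ∈ Grid m n → SegTrue A B X → SegTrue C D X →
      1 ≤ X.1 ∧ X.1 ≤ (m : ℤ) - 2 ∧ 1 ≤ X.2 ∧ X.2 ≤ (n : ℤ) - 2) :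
    Metric.infDist (ptE A) (affineSpan ℝ {ptE C, ptE D} : Set (EuclideanSpace ℝ (Fin 2))) ≤ 1 ∧
    Metric.infDist (ptE B) (affineSpan ℝ {ptE C, ptE D} : Set (EuclideanSpace ℝ (Fin 2))) ≤ 1 := by
  obtain ⟨hA, hB, -, -, hAB, hCD, hCDA, hCDB, -, -⟩ := hpair
  have hW : Wedge A B C D ∩ Grid m n ⊆ GridInterior m n := fun X ⟨⟨h₁, h₂⟩, hX⟩ =>
    hbnd X hX (segTrue_of_one_le_orient h₁) (segTrue_of_one_le_orient h₂)
  have hAi : A ∈ GridInterior m n := hbnd A hA (segTrue_self hAB.ne) hCDA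
  obtain ⟨hsign₁, hsign₂⟩ := mul_nonpos_of_wedge hW hAi (orient_nonneg_of_segTrue hCDA)
  have hAle : orient C D A ≤ max |D.1 - C.1| |D.2 - C.2| := by
    by_contra! hfar
    obtain ⟨hv, hh⟩ := steps_mem_grid_of_mem_gridInterior (A := A) (B := B) hAi
    exact false_of_far hW hAB.ne hsign₁ hsign₂ (orient_left_eq_zero A B) hfar hv hh
  have hBle : orient C D B ≤ max |D.1 - C.1| |D.2 - C.2| := by
    by_contra! hfar
    obtain ⟨hv, hh⟩ := steps_mem_grid hW hAi hB hfar
    exact false_of_far hW hAB.ne hsign₁ hsign₂ (orient_right_eq_zero A B) hfar hv hh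
  exact ⟨infDist_affineSpan_le_one hCD.ne (sq_le_of_le_max (orient_nonneg_of_segTrue hCDA) hAle),
    infDist_affineSpan_le_one hCD.ne (sq_le_of_le_max (orient_nonneg_of_segTrue hCDB) hBle)⟩
end

section
/- Let A, B, C, D be points in the plane ℝ² with A ≠ B and C ≠ D. The segments AB and CD are in convex position if and only if the line through A and B does not intersect the segment CD and the line through C and D does not intersect the segment AB. -/
open scoped Real

/-!
The line through `P` and `Q` is the zero set of the affine functional
`X ↦ detR (Q - P) (X - P)`, so it misses the segment `RS` exactly when this functional has
the same strict sign at `R` and at `S`. Convex position of `AB` and `CD` is the same sign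
pattern: `C` and `D` lie strictly on one side of line `AB`, and `A` and `B` strictly on one
side of line `CD`.
-/

def areaForm (P Q : ℝ × ℝ) : ℝ × ℝ →ᵃ[ℝ] ℝ where
  toFun X := detR (Q - P) (X - P)
  linear :=
    { toFun := detR (Q - P)
      map_add' _ _ := by simp only [detR, Prod.fst_add, Prod.snd_add]; ring
      map_smul' _ _ := by
        simp only [detR, Prod.smul_fst, Prod.smul_snd, smul_eq_mul, RingHom.id_apply]; ring }
  map_vadd' _ _ := by
    simp only [detR, vadd_eq_add, Prod.fst_add, Prod.snd_add, Prod.fst_sub, Prod.snd_sub,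
      LinearMap.coe_mk, AddHom.coe_mk]; ring

theorem areaForm_apply (P Q X : ℝ × ℝ) : areaForm P Q X = detR (Q - P) (X - P) := rfl

theorem exists_smul_eq_iff_detR_eq_zero {v w : ℝ × ℝ} (hv : v ≠ 0) :
    (∃ r : ℝ, r • v = w) ↔ detR v w = 0 := by
  constructor
  · rintro ⟨r, rfl⟩
    simp only [detR, Prod.smul_fst, Prod.smul_snd, smul_eq_mul]; ring
  · intro h
    have hn : v.1 ^ 2 + v.2 ^ 2 ≠ 0 := by
      contrapose! hv
      have h₁ : v.1 = 0 := by nlinarith [sq_nonneg v.1, sq_nonneg v.2]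
      have h₂ : v.2 = 0 := by nlinarith [sq_nonneg v.1, sq_nonneg v.2]
      exact Prod.ext h₁ h₂
    simp only [detR] at h
    -- the coefficient of the orthogonal projection of `w` onto `v`
    refine ⟨(v.1 * w.1 + v.2 * w.2) / (v.1 ^ 2 + v.2 ^ 2), Prod.ext ?_ ?_⟩ <;>
      simp only [Prod.smul_fst, Prod.smul_snd, smul_eq_mul] <;> field_simp
    · linear_combination v.2 * h
    · linear_combination -v.1 * h

theorem mem_affineSpan_pair_iff_areaForm_eq_zero {P Q X : ℝ × ℝ} (hPQ : P ≠ Q) :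
    X ∈ line[ℝ, P, Q] ↔ areaForm P Q X = 0 := by
  rw [← vsub_vadd X P, vadd_left_mem_affineSpan_pair, vsub_vadd, areaForm_apply]
  exact exists_smul_eq_iff_detR_eq_zero (sub_ne_zero.2 hPQ.symm)

theorem zero_mem_segment_iff_mul_nonpos (a b : ℝ) : (0 : ℝ) ∈ segment ℝ a b ↔ a * b ≤ 0 := by
  rw [segment_eq_uIcc, Set.mem_uIcc, mul_nonpos_iff]
  tauto

theorem affineSpan_pair_inter_segment_eq_empty_iff {P Q : ℝ × ℝ} (hPQ : P ≠ Q) (R S : ℝ × ℝ) :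
    (line[ℝ, P, Q] : Set (ℝ × ℝ)) ∩ segment ℝ R S = ∅ ↔
      0 < detR (Q - P) (R - P) * detR (Q - P) (S - P) := by
  have hline : (line[ℝ, P, Q] : Set (ℝ × ℝ)) = areaForm P Q ⁻¹' {0} :=
    Set.ext fun X ↦ mem_affineSpan_pair_iff_areaForm_eq_zero hPQ
  rw [hline, ← not_le, ← zero_mem_segment_iff_mul_nonpos, ← areaForm_apply, ← areaForm_apply,
    ← image_segment, Set.eq_empty_iff_forall_notMem]
  simp only [Set.mem_inter_iff, Set.mem_preimage, Set.mem_singleton_iff, Set.mem_image,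
    not_exists, not_and]
  exact forall_congr' fun _ ↦ imp_not_comm

theorem detR_sub_swap (C D X : ℝ × ℝ) : detR (C - D) (X - D) = -detR (D - C) (X - C) := by
  simp only [detR, Prod.fst_sub, Prod.snd_sub]; ring

theorem quadConvR_iff (A B C D : ℝ × ℝ) :
    QuadConvR A B C D ↔
      (0 < detR (B - A) (C - A) ∧ 0 < detR (B - A) (D - A) ∧
        0 < detR (D - C) (A - C) ∧ 0 < detR (D - C) (B - C)) ∨
      (detR (B - A) (C - A) < 0 ∧ detR (B - A) (D - A) < 0 ∧
        detR (D - C) (A - C) < 0 ∧ detR (D - C) (B - C) < 0) := by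
  have h₁ : detR (B - A) (C - B) = detR (B - A) (C - A) := by
    simp only [detR, Prod.fst_sub, Prod.snd_sub]; ring
  have h₂ : detR (C - B) (D - C) = detR (D - C) (B - C) := by
    simp only [detR, Prod.fst_sub, Prod.snd_sub]; ring
  have h₃ : detR (D - C) (A - D) = detR (D - C) (A - C) := by
    simp only [detR, Prod.fst_sub, Prod.snd_sub]; ring
  have h₄ : detR (A - D) (B - A) = detR (B - A) (D - A) := by
    simp only [detR, Prod.fst_sub, Prod.snd_sub]; ring
  rw [QuadConvR, h₁, h₂, h₃, h₄]
  tauto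

/-- AB and CD are in convex position iff the line through A, B misses the
segment CD and the line through C, D misses the segment AB. -/
theorem convexPos_iff_lines_miss_segments (A B C D : ℝ × ℝ) (hAB : A ≠ B) (hCD : C ≠ D) :
    ConvexPosR A B C D ↔
      (affineSpan ℝ {A, B} : Set (ℝ × ℝ)) ∩ segment ℝ C D = ∅ ∧
      (affineSpan ℝ {C, D} : Set (ℝ × ℝ)) ∩ segment ℝ A B = ∅ := by
  rw [affineSpan_pair_inter_segment_eq_empty_iff hAB,
    affineSpan_pair_inter_segment_eq_empty_iff hCD, ConvexPosR, quadConvR_iff, quadConvR_iff,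
    detR_sub_swap C D A, detR_sub_swap C D B,
    mul_pos_iff, mul_pos_iff, neg_pos, neg_pos, neg_lt_zero, neg_lt_zero]
  tauto
end

section
/- The map sending a proper pair of oriented segments (→AB, →CD) whose endpoints A, B, C, D are in convex position to the underlying unordered pair of (non-oriented) segments {AB, CD} is a bijection between the set of proper pairs of oriented segments in 𝒢_{m,n} whose two segments are in convex position and the set of unordered pairs of prime segments with endpoints in 𝒢_{m,n} that are in convex position. -/
open scoped Real

/-!
In convex position no three of the four endpoints are collinear, so `SegTrue` only reads the
sign of a determinant, and reversing a segment flips that sign. Properness of `(→AB, →CD)` then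
says exactly that `A, B, C, D` is a counterclockwise convex quadrilateral: of the four
orientations of an unordered pair in convex position, precisely one is proper.
-/

def QuadCCW (A B C D : ℤ × ℤ) : Prop :=
  0 < detZ (B - A) (C - B) ∧ 0 < detZ (C - B) (D - C) ∧
    0 < detZ (D - C) (A - D) ∧ 0 < detZ (A - D) (B - A)

section

variable {m n : ℕ} {A B C D A' B' C' D' X : ℤ × ℤ}

lemma detZ_sub_swap (A B X : ℤ × ℤ) : detZ (A - B) (X - B) = -detZ (B - A) (X - A) := by
  simp only [detZ, Prod.fst_sub, Prod.snd_sub]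
  ring

lemma PrimeSeg.symm (h : PrimeSeg A B) : PrimeSeg B A := by
  rwa [PrimeSeg, ← neg_sub B.1, ← neg_sub B.2, Int.neg_gcd, Int.gcd_neg]

lemma SegTrue.detZ_pos (h : SegTrue A B X) (hX : detZ (B - A) (X - A) ≠ 0) :
    0 < detZ (B - A) (X - A) := by
  rcases h with ⟨h0, -⟩ | h
  · exact absurd h0 hX
  · exact h

lemma prod_eq_of_segTrue_of_sym2_eq (hs : s(A, B) = s(A', B')) (h : SegTrue A B X)
    (h' : SegTrue A' B' X) (hX : detZ (B - A) (X - A) ≠ 0) : (A, B) = (A', B') := by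
  rcases Sym2.eq_iff.1 hs with ⟨rfl, rfl⟩ | ⟨rfl, rfl⟩
  · rfl
  · have hpos := h.detZ_pos hX
    have hpos' := h'.detZ_pos (by rwa [detZ_sub_swap, neg_ne_zero])
    rw [detZ_sub_swap] at hpos'
    linarith

lemma ConvexPos.detZ_ne_zero (h : ConvexPos A B C D) : detZ (B - A) (C - A) ≠ 0 := by
  intro h0
  rcases h with (⟨h₁, -⟩ | ⟨h₁, -⟩) | (⟨-, -, -, h₄⟩ | ⟨-, -, -, h₄⟩) <;>
    simp only [detZ, Prod.fst_sub, Prod.snd_sub] at * <;> linarith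

lemma ConvexPos.swap (h : ConvexPos A B C D) : ConvexPos C D A B := by
  rcases h with (⟨h₁, h₂, h₃, h₄⟩ | ⟨h₁, h₂, h₃, h₄⟩) | (⟨h₁, h₂, h₃, h₄⟩ | ⟨h₁, h₂, h₃, h₄⟩)
  · exact Or.inl (Or.inl ⟨h₃, h₄, h₁, h₂⟩)
  · exact Or.inl (Or.inr ⟨h₃, h₄, h₁, h₂⟩)
  · refine Or.inr (Or.inr ⟨?_, ?_, ?_, ?_⟩) <;>
      simp only [detZ, Prod.fst_sub, Prod.snd_sub] at * <;> linarith
  · refine Or.inr (Or.inl ⟨?_, ?_, ?_, ?_⟩) <;>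
      simp only [detZ, Prod.fst_sub, Prod.snd_sub] at * <;> linarith

lemma QuadConv.quadCCW_or (h : QuadConv A B C D) : QuadCCW A B C D ∨ QuadCCW B A D C := by
  rcases h with h | ⟨h₁, h₂, h₃, h₄⟩
  · exact Or.inl h
  · refine Or.inr ⟨?_, ?_, ?_, ?_⟩ <;>
      simp only [detZ, Prod.fst_sub, Prod.snd_sub] at * <;> linarith

lemma QuadCCW.convexPos (h : QuadCCW A B C D) : ConvexPos A B C D :=
  Or.inl (Or.inl h)

lemma QuadCCW.properPair (hA : A ∈ Grid m n) (hB : B ∈ Grid m n) (hC : C ∈ Grid m n)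
    (hD : D ∈ Grid m n) (hAB : PrimeSeg A B) (hCD : PrimeSeg C D) (h : QuadCCW A B C D) :
    ProperPair m n A B C D := by
  obtain ⟨h₁, h₂, h₃, h₄⟩ := h
  refine ⟨hA, hB, hC, hD, hAB, hCD, Or.inr ?_, Or.inr ?_, Or.inr ?_, Or.inr ?_⟩ <;>
    simp only [detZ, Prod.fst_sub, Prod.snd_sub] at * <;> linarith

lemma ConvexPos.exists_properPair (hA : A ∈ Grid m n) (hB : B ∈ Grid m n)
    (hC : C ∈ Grid m n) (hD : D ∈ Grid m n) (hAB : PrimeSeg A B) (hCD : PrimeSeg C D)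
    (h : ConvexPos A B C D) :
    ∃ A' B' C' D', s(A', B') = s(A, B) ∧ s(C', D') = s(C, D) ∧
      ProperPair m n A' B' C' D' ∧ ConvexPos A' B' C' D' := by
  rcases h with h | h <;> rcases h.quadCCW_or with h | h
  · exact ⟨A, B, C, D, rfl, rfl, h.properPair hA hB hC hD hAB hCD, h.convexPos⟩
  · exact ⟨B, A, D, C, Sym2.eq_swap, Sym2.eq_swap,
      h.properPair hB hA hD hC hAB.symm hCD.symm, h.convexPos⟩
  · exact ⟨A, B, D, C, rfl, Sym2.eq_swap, h.properPair hA hB hD hC hAB hCD.symm, h.convexPos⟩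
  · exact ⟨B, A, C, D, Sym2.eq_swap, rfl, h.properPair hB hA hC hD hAB.symm hCD, h.convexPos⟩

lemma ProperPair.swap (h : ProperPair m n A B C D) : ProperPair m n C D A B := by
  obtain ⟨hA, hB, hC, hD, hAB, hCD, hCDA, hCDB, hABC, hABD⟩ := h
  exact ⟨hC, hD, hA, hB, hCD, hAB, hABC, hABD, hCDA, hCDB⟩

lemma ProperPair.segTrue_of_mem (h : ProperPair m n A B C D) (hX : X ∈ s(C, D)) :
    SegTrue A B X := by
  obtain ⟨-, -, -, -, -, -, -, -, hABC, hABD⟩ := h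
  rcases Sym2.mem_iff.1 hX with rfl | rfl
  exacts [hABC, hABD]

lemma ProperPair.prod_eq_of_sym2_eq (h : ProperPair m n A B C D) (hc : ConvexPos A B C D)
    (h' : ProperPair m n A' B' C' D') (hAB : s(A, B) = s(A', B')) (hCD : s(C, D) = s(C', D')) :
    (A, B) = (A', B') :=
  prod_eq_of_segTrue_of_sym2_eq hAB (h.segTrue_of_mem (Sym2.mem_mk_left C D))
    (h'.segTrue_of_mem (hCD ▸ Sym2.mem_mk_left C D)) hc.detZ_ne_zero

lemma ProperPair.sym2_eq_of_sym2_eq (h : ProperPair m n A B C D) (hc : ConvexPos A B C D)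
    (h' : ProperPair m n A' B' C' D') (hs : s(s(A, B), s(C, D)) = s(s(A', B'), s(C', D'))) :
    s((A, B), (C, D)) = s((A', B'), (C', D')) := by
  rcases Sym2.eq_iff.1 hs with ⟨hAB, hCD⟩ | ⟨hAB, hCD⟩
  · rw [h.prod_eq_of_sym2_eq hc h' hAB hCD, h.swap.prod_eq_of_sym2_eq hc.swap h'.swap hCD hAB]
  · rw [h.prod_eq_of_sym2_eq hc h'.swap hAB hCD, h.swap.prod_eq_of_sym2_eq hc.swap h' hCD hAB,
      Sym2.eq_swap]

end

/-- forgetting orientations is a bijection between proper pairs of oriented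
segments in convex position and unordered pairs of prime segments in convex position. -/
theorem proper_pairs_to_prime_pairs_bijection (m n : ℕ) :
    Set.BijOn (Sym2.map (Function.uncurry Sym2.mk))
      {z : Sym2 ((ℤ × ℤ) × (ℤ × ℤ)) | ∃ A B C D : ℤ × ℤ,
        z = s((A, B), (C, D)) ∧ ProperPair m n A B C D ∧ ConvexPos A B C D}
      (ConvexPrimePairs m n) := by
  refine ⟨?_, ?_, ?_⟩
  · rintro _ ⟨A, B, C, D, rfl, ⟨hA, hB, hC, hD, hAB, hCD, -⟩, hc⟩
    exact ⟨A, B, C, D, rfl, hA, hB, hC, hD, hAB, hCD, hc⟩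
  · rintro _ ⟨A, B, C, D, rfl, hP, hc⟩ _ ⟨A', B', C', D', rfl, hP', -⟩ hs
    exact hP.sym2_eq_of_sym2_eq hc hP' hs
  · rintro _ ⟨A, B, C, D, rfl, hA, hB, hC, hD, hAB, hCD, hc⟩
    obtain ⟨A', B', C', D', hAB', hCD', hP, hc'⟩ := hc.exists_properPair hA hB hC hD hAB hCD
    exact ⟨s((A', B'), (C', D')), ⟨A', B', C', D', rfl, hP, hc'⟩, by
      rw [Sym2.map_mk, Function.uncurry_apply_pair, Function.uncurry_apply_pair, hAB', hCD']⟩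
end

section
/- There is an absolute constant K such that for all positive integers u, v, |Z₃(u,v)| + |Z₄(u,v)| ≤ K·uv. -/
open scoped Real

/-!
Every pair in `Z₃(u,v) ∪ Z₄(u,v)` has at least three of its four endpoints among the four
corners of `ℛ_{u,v}`, and its remaining endpoint among the `(u+1)(v+1)` lattice points of
`ℛ_{u,v}`. Hence `|Zᵢ(u,v)| ≤ 4 · 4³ · (u+1)(v+1) ≤ 1024 uv` for `i ≥ 3`.
-/

open Finset

section OneFreeTuples

variable {α : Type*} [DecidableEq α]

/-- Quadruples with entries in `B`, all but at most one of them in `S`. -/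
def oneFreeTuples (S B : Finset α) : Finset (α × α × α × α) :=
  B ×ˢ S ×ˢ S ×ˢ S ∪ S ×ˢ B ×ˢ S ×ˢ S ∪ S ×ˢ S ×ˢ B ×ˢ S ∪ S ×ˢ S ×ˢ S ×ˢ B

theorem card_oneFreeTuples_le (S B : Finset α) :
    #(oneFreeTuples S B) ≤ 4 * (#B * #S ^ 3) :=
  calc #(oneFreeTuples S B)
      ≤ #(B ×ˢ S ×ˢ S ×ˢ S) + #(S ×ˢ B ×ˢ S ×ˢ S) + #(S ×ˢ S ×ˢ B ×ˢ S) +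
          #(S ×ˢ S ×ˢ S ×ˢ B) := by
        refine (card_union_le _ _).trans (Nat.add_le_add_right ?_ _)
        refine (card_union_le _ _).trans (Nat.add_le_add_right ?_ _)
        exact card_union_le _ _
    _ = 4 * (#B * #S ^ 3) := by simp only [card_product]; ring

theorem mem_oneFreeTuples {S B : Finset α} {a b c d : α}
    (ha : a ∈ B) (hb : b ∈ B) (hc : c ∈ B) (hd : d ∈ B)
    (h : 3 ≤ ([a, b, c, d].filter (· ∈ S)).length) :
    (a, b, c, d) ∈ oneFreeTuples S B := by
  by_cases a ∈ S <;> by_cases b ∈ S <;> by_cases c ∈ S <;> by_cases d ∈ S <;>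
    simp_all [oneFreeTuples]

end OneFreeTuples

def rectCorners (u v : ℕ) : Finset (ℤ × ℤ) := {0, (u : ℤ)} ×ˢ {0, (v : ℤ)}

noncomputable def rectPoints (u v : ℕ) : Finset (ℤ × ℤ) := Icc 0 (u : ℤ) ×ˢ Icc 0 (v : ℤ)

theorem rectCorner_iff_mem_rectCorners {u v : ℕ} {P : ℤ × ℤ} :
    RectCorner u v P ↔ P ∈ rectCorners u v := by
  simp [RectCorner, rectCorners]

theorem card_rectCorners_le (u v : ℕ) : #(rectCorners u v) ≤ 4 := by
  rw [rectCorners, card_product]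
  exact Nat.mul_le_mul (card_le_two (a := 0) (b := (u : ℤ))) card_le_two

theorem card_rectPoints (u v : ℕ) : #(rectPoints u v) = (u + 1) * (v + 1) := by
  simp only [rectPoints, card_product, Int.card_Icc, sub_zero]
  rw [← Nat.cast_add_one, ← Nat.cast_add_one, Int.toNat_natCast, Int.toNat_natCast]

theorem InBBox.mem_rectPoints {u v : ℕ} {A B C D : ℤ × ℤ} (h : InBBox u v A B C D) :
    A ∈ rectPoints u v ∧ B ∈ rectPoints u v ∧ C ∈ rectPoints u v ∧ D ∈ rectPoints u v := by
  obtain ⟨h₁, h₂, h₃, h₄⟩ := h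
  simp only [rectPoints, mem_product, mem_Icc]
  omega

theorem cornerCount_le_length_filter (u v : ℕ) (A B C D : ℤ × ℤ) :
    cornerCount u v A B C D ≤ ([A, B, C, D].filter (· ∈ rectCorners u v)).length := by
  have hset : {P : ℤ × ℤ | P ∈ ({A, B, C, D} : Set (ℤ × ℤ)) ∧ RectCorner u v P} =
      ↑([A, B, C, D].filter (· ∈ rectCorners u v)).toFinset := by
    ext P
    simp [rectCorner_iff_mem_rectCorners]
  rw [cornerCount, hset, Set.ncard_coe_finset]
  exact List.toFinset_card_le _

def segPairOfTuple {α : Type*} (t : α × α × α × α) : Sym2 (Sym2 α) :=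
  s(s(t.1, t.2.1), s(t.2.2.1, t.2.2.2))

theorem Zi_subset_image_oneFreeTuples {i : ℕ} (hi : 3 ≤ i) (u v : ℕ) :
    Zi i u v ⊆ ((oneFreeTuples (rectCorners u v) (rectPoints u v)).image segPairOfTuple :) := by
  rintro z ⟨A, B, C, D, rfl, hZ, hcount⟩
  obtain ⟨hA, hB, hC, hD⟩ := hZ.2.2.2.mem_rectPoints
  have h3 := cornerCount_le_length_filter u v A B C D
  exact mem_image_of_mem _ (mem_oneFreeTuples hA hB hC hD (by omega))

theorem ncard_Zi_le {i : ℕ} (hi : 3 ≤ i) (u v : ℕ) :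
    (Zi i u v).ncard ≤ 256 * ((u + 1) * (v + 1)) :=
  calc (Zi i u v).ncard
      ≤ #(oneFreeTuples (rectCorners u v) (rectPoints u v)) := by
        refine (Set.ncard_le_ncard (Zi_subset_image_oneFreeTuples hi u v)
          (Finset.finite_toSet _)).trans ?_
        rw [Set.ncard_coe_finset]
        exact card_image_le
    _ ≤ 4 * ((u + 1) * (v + 1) * 4 ^ 3) := by
        rw [← card_rectPoints]
        exact (card_oneFreeTuples_le _ _).trans
          (by gcongr; exact card_rectCorners_le u v)
    _ = 256 * ((u + 1) * (v + 1)) := by ring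

/-- |Z₃(u,v)| + |Z₄(u,v)| ≤ K·uv. -/
theorem Z3_add_Z4_bound :
    ∃ K : ℝ, ∀ u v : ℕ, 0 < u → 0 < v →
      ((Zi 3 u v).ncard : ℝ) + ((Zi 4 u v).ncard : ℝ) ≤ K * (u : ℝ) * (v : ℝ) := by
  refine ⟨2048, fun u v hu hv => ?_⟩
  have hsum : (Zi 3 u v).ncard + (Zi 4 u v).ncard ≤ 512 * ((u + 1) * (v + 1)) := by
    have := ncard_Zi_le (le_refl 3) u v
    have := ncard_Zi_le (by norm_num : 3 ≤ 4) u v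
    omega
  have hsumR : ((Zi 3 u v).ncard : ℝ) + (Zi 4 u v).ncard ≤ 512 * ((u + 1) * (v + 1)) := by
    exact_mod_cast hsum
  have hu' : (1 : ℝ) ≤ u := by exact_mod_cast hu
  have hv' : (1 : ℝ) ≤ v := by exact_mod_cast hv
  have hbox : ((u : ℝ) + 1) * (v + 1) ≤ 4 * u * v := by nlinarith
  linarith
end
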